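/- arXiv:1011.5201 — 4 statements merged into one kernel-verified Lean document; each statement's English description precedes it below -/
import Mathlib

section
/- (Lemma 2.3(c).) Let a be a primitive word over A. Then a ∼_c a^T if and only if there exists a primitive word b over A such that a ∼_c b and b = b^T. -/
/-! Statement 6: (Lemma 2.3(c).) A primitive word `a` satisfies `a ∼_c a^T` iff it is
cyclically equivalent to a primitive word `b` with `b = b^T`. -/

/-- The transpose of a word: reverse it and apply the involution to each letter. -/
def wordT {A : Type*} (τ : A → A) (w : List A) : List A := (w.reverse).map τ

/-- The `m`-th power `e^m` of a word `e` (concatenation of `m` copies). -/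
def wpow {A : Type*} (e : List A) (m : ℕ) : List A := (List.replicate m e).flatten

/-- A word is primitive if it is nonempty and is not a power `e^m` with `m ≥ 2`. -/
def WPrimitive {A : Type*} (w : List A) : Prop :=
  w ≠ [] ∧ ∀ (e : List A) (m : ℕ), 2 ≤ m → w ≠ wpow e m

namespace Aux

variable {A : Type*}

theorem wordT_append (τ : A → A) (u v : List A) :
    wordT τ (u ++ v) = wordT τ v ++ wordT τ u := by
  simp [wordT]

theorem length_wordT (τ : A → A) (u : List A) : (wordT τ u).length = u.length := by
  simp [wordT]

theorem wordT_wordT (τ : A → A) (hinv : ∀ y, τ (τ y) = y) (u : List A) :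
    wordT τ (wordT τ u) = u := by
  simp [wordT, List.map_map, Function.comp_def, hinv]

theorem wpow_succ (e : List A) (m : ℕ) : wpow e (m + 1) = e ++ wpow e m := by
  simp [wpow, List.replicate_succ]

theorem wpow_succ' (e : List A) (m : ℕ) : wpow e (m + 1) = wpow e m ++ e := by
  induction m with
  | zero => simp [wpow]
  | succ k ih =>
    rw [wpow_succ, ih, ← List.append_assoc, ← wpow_succ, ih]

theorem length_wpow (e : List A) (m : ℕ) : (wpow e m).length = m * e.length := by
  induction m with
  | zero => simp [wpow]
  | succ k ih => rw [wpow_succ]; simp [ih]; ring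

/-- Rotating a power of `e` by the length of `e` gives it back. -/
theorem rotate_wpow_length (e : List A) (m : ℕ) (hm : 1 ≤ m) :
    (wpow e m).rotate e.length = wpow e m := by
  obtain ⟨k, rfl⟩ := Nat.exists_eq_add_of_le hm
  rw [show 1 + k = k + 1 from by omega, wpow_succ]
  have h1 : e.length ≤ (e ++ wpow e k).length := by simp
  rw [List.rotate_eq_drop_append_take h1, List.drop_left, List.take_left,
    ← wpow_succ', wpow_succ]

theorem rotate_wpow_mul (e : List A) (m : ℕ) (hm : 1 ≤ m) (q : ℕ) :
    (wpow e m).rotate (e.length * q) = wpow e m := by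
  induction q with
  | zero => simp
  | succ k ih =>
    have h : e.length * (k + 1) = e.length * k + e.length := by ring
    rw [h, ← List.rotate_rotate, ih, rotate_wpow_length e m hm]

/-- Key conjugation identity: `d ++ (t ++ d)^k ++ t = (d ++ t)^(k+1)`. -/
theorem pow_conj (d t : List A) (k : ℕ) :
    d ++ wpow (t ++ d) k ++ t = wpow (d ++ t) (k + 1) := by
  induction k with
  | zero => simp [wpow]
  | succ j ih =>
    rw [wpow_succ, wpow_succ]
    rw [show d ++ (t ++ d ++ wpow (t ++ d) j) ++ t
        = (d ++ t) ++ (d ++ wpow (t ++ d) j ++ t) by simp [List.append_assoc], ih]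

/-- Any rotation of a power is a power (with the same exponent). -/
theorem rotate_wpow (e : List A) (m : ℕ) (n : ℕ) :
    ∃ f : List A, (wpow e m).rotate n = wpow f m := by
  rcases Nat.eq_zero_or_pos m with rfl | hm
  · exact ⟨e, by simp [wpow]⟩
  rcases eq_or_ne e [] with rfl | he
  · refine ⟨[], ?_⟩
    have h0 : wpow ([] : List A) m = [] := by simp [wpow]
    simp [h0]
  have hepos : 0 < e.length := List.length_pos_iff.2 he
  set r := n % e.length with hr
  have hrlt : r < e.length := Nat.mod_lt _ hepos
  have hdiv : n = e.length * (n / e.length) + r := (Nat.div_add_mod n e.length).symm ▸ rfl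
  have hrot : (wpow e m).rotate n = (wpow e m).rotate r := by
    calc (wpow e m).rotate n = ((wpow e m).rotate (e.length * (n / e.length))).rotate r := by
          rw [List.rotate_rotate, ← hdiv]
      _ = (wpow e m).rotate r := by rw [rotate_wpow_mul e m hm]
  refine ⟨e.rotate r, ?_⟩
  rw [hrot]
  obtain ⟨k, hmk⟩ := Nat.exists_eq_add_of_le hm
  rw [show (1 : ℕ) + k = k + 1 from by omega] at hmk
  subst hmk
  have hrle : r ≤ e.length := le_of_lt hrlt
  have h1 : r ≤ (wpow e (k + 1)).length := by
    rw [length_wpow]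
    calc r ≤ e.length := hrle
      _ ≤ (k + 1) * e.length := Nat.le_mul_of_pos_left _ (by omega)
  have hlen : (e.take r).length = r := List.length_take_of_le hrle
  have hsplit : wpow e (k + 1) = e.take r ++ (e.drop r ++ wpow e k) := by
    rw [wpow_succ, ← List.append_assoc, List.take_append_drop]
  have htake : (wpow e (k + 1)).take r = e.take r := by
    rw [hsplit]; exact List.take_left' hlen
  have hdrop : (wpow e (k + 1)).drop r = e.drop r ++ wpow e k := by
    rw [hsplit]; exact List.drop_left' hlen
  have hed : e = e.take r ++ e.drop r := (List.take_append_drop r e).symm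
  have key := pow_conj (e.drop r) (e.take r) k
  rw [← hed] at key
  rw [List.rotate_eq_drop_append_take h1, List.rotate_eq_drop_append_take hrle,
    htake, hdrop, ← key]

/-- A nonempty τ-palindrome (with τ fixed-point-free) splits as `q^T ++ q`. -/
theorem pal_decomp (τ : A → A) (hfix : ∀ y, τ y ≠ y)
    (u : List A) (hne : u ≠ []) (hu : u = wordT τ u) :
    ∃ q : List A, u = wordT τ q ++ q := by
  have heven : Even u.length := by
    by_contra hodd
    obtain ⟨k, hk⟩ := Nat.not_even_iff_odd.1 hodd
    have hklt : k < u.length := by omega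
    have h3 : u.length - 1 - k = k := by omega
    have h1 : u[k]'hklt = (wordT τ u)[k]'(by rw [← hu]; exact hklt) :=
      List.getElem_of_eq hu hklt
    have h2 : (wordT τ u)[k]'(by rw [← hu]; exact hklt) = τ (u[k]'hklt) := by
      simp only [wordT, List.getElem_map, List.getElem_reverse, h3]
    exact hfix _ ((h1.trans h2).symm)
  obtain ⟨k, hk⟩ := heven
  refine ⟨u.drop k, ?_⟩
  have hkle : k ≤ u.length := by omega
  have hsplit : u = u.take k ++ u.drop k := (List.take_append_drop k u).symm
  have hlen1 : (u.take k).length = k := List.length_take_of_le hkle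
  have hlen2 : (wordT τ (u.drop k)).length = k := by
    rw [length_wordT, List.length_drop]; omega
  have hu2 : u.take k ++ u.drop k = wordT τ (u.drop k) ++ wordT τ (u.take k) := by
    calc u.take k ++ u.drop k = u := List.take_append_drop k u
      _ = wordT τ u := hu
      _ = wordT τ (u.take k ++ u.drop k) := by rw [List.take_append_drop]
      _ = wordT τ (u.drop k) ++ wordT τ (u.take k) := wordT_append τ _ _
  have heq := (List.append_inj hu2 (by rw [hlen1, hlen2])).1
  conv_lhs => rw [hsplit, heq]

/-- From a rotation, extract the two-factor decomposition. -/
theorem exists_append_of_isRotated {a b : List A} (h : a.IsRotated b) :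
    ∃ u v : List A, a = u ++ v ∧ b = v ++ u := by
  obtain ⟨n, hn⟩ := h
  rcases eq_or_ne a [] with rfl | hne
  · exact ⟨[], [], by simp, by simpa using hn.symm⟩
  have hpos : 0 < a.length := List.length_pos_iff.2 hne
  set r := n % a.length with hr
  have hrle : r ≤ a.length := le_of_lt (Nat.mod_lt _ hpos)
  have h1 : a.rotate r = b := by rw [hr, List.rotate_mod, hn]
  rw [List.rotate_eq_drop_append_take hrle] at h1
  exact ⟨a.take r, a.drop r, (List.take_append_drop r a).symm, h1.symm⟩

/-- Primitivity is invariant under rotation. -/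
theorem wprimitive_of_isRotated {a b : List A} (h : a.IsRotated b)
    (ha : WPrimitive a) : WPrimitive b := by
  constructor
  · intro hb
    obtain ⟨n, hn⟩ := h
    apply ha.1
    rw [← List.length_eq_zero_iff]
    have := congrArg List.length hn
    rw [List.length_rotate] at this
    rw [this, hb]; rfl
  · intro e m hm hbe
    obtain ⟨n, hn⟩ := h.symm
    obtain ⟨f, hf⟩ := rotate_wpow e m n
    exact ha.2 f m hm (by rw [← hn, hbe, hf])

end Aux

open Aux in
/-- **Lemma 2.3(c).** Let `τ` be a fixed-point-free involution of the alphabet `A` and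
let `a` be a primitive word. Then `a^T` is a cyclic permutation of `a` if and only if
there is a primitive word `b`, a cyclic permutation of `a`, with `b = b^T`. -/
theorem rotated_transpose_iff {A : Type*} (τ : A → A) (hinv : ∀ y, τ (τ y) = y)
    (hfix : ∀ y, τ y ≠ y) (a : List A) (ha : WPrimitive a) :
    List.IsRotated a (wordT τ a) ↔
      ∃ b : List A, WPrimitive b ∧ List.IsRotated a b ∧ b = wordT τ b := by
  constructor
  · intro h
    obtain ⟨u, v, hau, hT⟩ := exists_append_of_isRotated h
    have hT2 : wordT τ a = wordT τ v ++ wordT τ u := by rw [hau, wordT_append]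
    have hvu : v ++ u = wordT τ v ++ wordT τ u := by rw [← hT, hT2]
    have hlenv : v.length = (wordT τ v).length := (length_wordT τ v).symm
    obtain ⟨hv, huu⟩ := List.append_inj hvu hlenv
    rcases eq_or_ne u [] with rfl | hune
    · refine ⟨a, ha, List.IsRotated.refl a, ?_⟩
      rw [hT2, ← hv]
      simpa [wordT] using hau
    rcases eq_or_ne v [] with rfl | hvne
    · refine ⟨a, ha, List.IsRotated.refl a, ?_⟩
      rw [hT2, ← huu]
      simpa [wordT] using hau
    obtain ⟨q, hq⟩ := pal_decomp τ hfix u hune huu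
    obtain ⟨s, hs⟩ := pal_decomp τ hfix v hvne hv
    have hrot : List.IsRotated a (q ++ (wordT τ s ++ s) ++ wordT τ q) := by
      rw [hau, hq, hs]
      have h1 : wordT τ q ++ q ++ (wordT τ s ++ s)
          = wordT τ q ++ (q ++ (wordT τ s ++ s)) := by simp [List.append_assoc]
      have h2 : q ++ (wordT τ s ++ s) ++ wordT τ q
          = (q ++ (wordT τ s ++ s)) ++ wordT τ q := by simp [List.append_assoc]
      rw [h1, h2]
      exact List.isRotated_append
    refine ⟨q ++ (wordT τ s ++ s) ++ wordT τ q,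
      wprimitive_of_isRotated hrot ha, hrot, ?_⟩
    rw [wordT_append, wordT_append, wordT_append, wordT_wordT τ hinv,
      wordT_wordT τ hinv]
    simp [List.append_assoc]
  · rintro ⟨b, _, hab, hbT⟩
    obtain ⟨u, v, hau, hbvu⟩ := exists_append_of_isRotated hab
    have h1 : wordT τ a = wordT τ v ++ wordT τ u := by rw [hau, wordT_append]
    have h2 : wordT τ b = wordT τ u ++ wordT τ v := by rw [hbvu, wordT_append]
    have h3 : wordT τ u ++ wordT τ v = v ++ u := by rw [← h2, ← hbT, hbvu]
    have r1 : a ~r (v ++ u) := by rw [hau]; exact List.isRotated_append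
    have r2 : (wordT τ u ++ wordT τ v) ~r (wordT τ v ++ wordT τ u) :=
      List.isRotated_append
    rw [h3, ← h1] at r2
    exact r1.trans r2
end

section
/- (Lemma 2.3(d).) Let a be a primitive word of length r over A with a = a^T, and let 1 ≤ l ≤ r. Then a is an l^T-subword of a if and only if l = r. -/
/-- `a = a_1 ⋯ a_r` is an `l^T`-subword of `b = b_1 ⋯ b_s` if `a_i = τ(b_{|l-i+1|_s})`
for all `1 ≤ i ≤ r` (here stated with 0-based list indices, `l` being 1-based). -/
def IsLTSubword {A : Type*} (τ : A → A) (a b : List A) (l : ℕ) : Prop :=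
  ∀ i, i < a.length →
    a[i]? = (b[(((l : ℤ) - (i : ℤ) - 1) % (b.length : ℤ)).toNat]?).map τ

/-- Two commuting words are powers of a common word: if `t ++ b = b ++ t` and the length
of `b` is `m` times the length of `t`, then `b = t^m`. -/
lemma comm_pow_aux {A : Type*} : ∀ (m : ℕ) (t b : List A), b.length = m * t.length →
    t ++ b = b ++ t → b = wpow t m := by
  intro m
  induction m with
  | zero => intro t b hlen _; simp at hlen; simp [wpow, hlen]
  | succ m ih =>
    intro t b hlen hcomm
    have htle : t.length ≤ b.length := by rw [hlen]; nlinarith [Nat.zero_le (m * t.length)]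
    have htake : b.take t.length = t := by
      have h1 : (t ++ b).take t.length = t := by simp
      have h2 : (b ++ t).take t.length = b.take t.length :=
        List.take_append_of_le_length htle
      rw [hcomm] at h1; rw [h2] at h1; exact h1
    have hb : b = t ++ b.drop t.length := by
      conv_lhs => rw [← List.take_append_drop t.length b, htake]
    have hlen' : (b.drop t.length).length = m * t.length := by
      simp [List.length_drop, hlen]; ring_nf; omega
    have hcomm' : t ++ b.drop t.length = b.drop t.length ++ t := by
      have := hcomm
      rw [hb] at this
      rw [List.append_assoc] at this
      exact (List.append_cancel_left this)
    have := ih t (b.drop t.length) hlen' hcomm'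
    rw [hb, this]
    simp [wpow, List.replicate_succ]

/-- If two rotations fix a list, so does the rotation by the gcd. -/
lemma rotate_gcd_aux {A : Type*} (a : List A) : ∀ l r : ℕ, a.rotate l = a → a.rotate r = a →
    a.rotate (Nat.gcd l r) = a := by
  intro l r
  induction l, r using Nat.gcd.induction with
  | H0 r => intro _ h; simpa using h
  | H1 l r hpos ih =>
    intro hl hr
    have hmul : ∀ k, a.rotate (k * l) = a := by
      intro k
      induction k with
      | zero => simp
      | succ k ihk => rw [Nat.succ_mul, ← List.rotate_rotate, ihk, hl]
    have hmod : a.rotate (r % l) = a := by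
      have h1 : (a.rotate (r % l)).rotate (r / l * l) = a.rotate (r / l * l) := by
        rw [List.rotate_rotate, hmul]
        rw [show r % l + r / l * l = r from by rw [Nat.add_comm]; exact Nat.div_add_mod' r l]
        exact hr
      exact List.rotate_injective _ h1
    rw [Nat.gcd_rec]
    exact ih hmod hl

/-- A word fixed by a nontrivial rotation is not primitive. -/
lemma not_prim_of_rotate_aux {A : Type*} (a : List A) (l : ℕ) (hl0 : 0 < l)
    (hlr : l < a.length) (hrot : a.rotate l = a)
    (hprim : ∀ (e : List A) (m : ℕ), 2 ≤ m → a ≠ wpow e m) : False := by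
  set r := a.length with hr
  set d := Nat.gcd l r with hd
  have hd0 : 0 < d := Nat.gcd_pos_of_pos_left _ hl0
  have hdl : d ≤ l := Nat.le_of_dvd hl0 (Nat.gcd_dvd_left _ _)
  have hddvd : d ∣ r := Nat.gcd_dvd_right _ _
  have hdr : d < r := lt_of_le_of_lt hdl hlr
  have hrotd : a.rotate d = a := rotate_gcd_aux a l r hrot (List.rotate_length a)
  have hdle : d ≤ r := le_of_lt hdr
  have hdecomp : a.drop d ++ a.take d = a := by
    rw [← List.rotate_eq_drop_append_take hdle]; exact hrotd
  have hcomm : a.take d ++ a.drop d = a.drop d ++ a.take d := by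
    rw [List.take_append_drop, hdecomp]
  have htlen : (a.take d).length = d := by simp [List.length_take]; omega
  have hm2 : 2 ≤ r / d := by
    rcases Nat.lt_or_ge (r / d) 2 with h | h
    · exfalso
      have := Nat.div_mul_cancel hddvd
      interval_cases h' : r / d <;> omega
    · exact h
  have hblen : (a.drop d).length = (r / d - 1) * (a.take d).length := by
    rw [htlen]
    have := Nat.div_mul_cancel hddvd
    simp [List.length_drop]
    rw [Nat.sub_one_mul]
    omega
  have hb := comm_pow_aux (r / d - 1) (a.take d) (a.drop d) hblen hcomm
  apply hprim (a.take d) (r / d) hm2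
  conv_lhs => rw [← List.take_append_drop d a, hb]
  have : r / d = (r / d - 1) + 1 := by omega
  rw [this]
  simp [wpow, List.replicate_succ]

/-- **Lemma 2.3(d).** Let `τ` be a fixed-point-free involution of `A` and let `a` be a
primitive word of length `r` with `a = a^T`, and `1 ≤ l ≤ r`. Then `a` is an
`l^T`-subword of `a` if and only if `l = r`. -/
theorem ltsubword_self_iff {A : Type*} (τ : A → A) (hinv : ∀ y, τ (τ y) = y)
    (hfix : ∀ y, τ y ≠ y) (a : List A) (ha : WPrimitive a) (hT : a = wordT τ a)
    (l : ℕ) (hl1 : 1 ≤ l) (hl2 : l ≤ a.length) :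
    IsLTSubword τ a a l ↔ l = a.length := by
  obtain ⟨hne, hprim⟩ := ha
  have hr0 : 0 < a.length := List.length_pos_iff.mpr hne
  have hinj : Function.Injective τ := Function.LeftInverse.injective hinv
  have hTi : ∀ i, i < a.length → a[i]? = (a[a.length - 1 - i]?).map τ := by
    intro i hi
    conv_lhs => rw [hT]
    unfold wordT
    rw [List.getElem?_map, List.getElem?_reverse hi]
  constructor
  · intro h
    by_contra hne'
    have hlr : l < a.length := lt_of_le_of_ne hl2 hne'
    have hrot : a.rotate l = a := by
      apply List.ext_getElem (by simp)
      intro j hj1 hj2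
      rw [List.getElem_rotate]
      have hj : j < a.length := hj2
      set i := a.length - 1 - j with hidef
      have hir : i < a.length := by omega
      have h1 := h i hir
      have h2 := hTi i hir
      have hji : a.length - 1 - i = j := by omega
      rw [hji] at h2
      have hkey : (((l:ℤ) - (i:ℤ) - 1) % (a.length:ℤ)).toNat = (j + l) % a.length := by
        have hcast : (i:ℤ) = (a.length:ℤ) - 1 - (j:ℤ) := by push_cast [hidef]; omega
        have heq : ((l:ℤ) - (i:ℤ) - 1) = ((j:ℤ) + (l:ℤ)) - (a.length:ℤ) := by
          rw [hcast]; ring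
        rw [heq, show ((j:ℤ) + (l:ℤ) - (a.length:ℤ))
            = ((j:ℤ) + (l:ℤ)) + (-1) * (a.length:ℤ) from by ring, Int.add_mul_emod_self_right]
        have : ((j:ℤ) + (l:ℤ)) % (a.length:ℤ) = (((j + l) % a.length : ℕ) : ℤ) := by
          push_cast; ring
        rw [this, Int.toNat_natCast]
      rw [hkey] at h1
      rw [h2] at h1
      have hK : (j + l) % a.length < a.length := Nat.mod_lt _ hr0
      rw [List.getElem?_eq_getElem hK, List.getElem?_eq_getElem hj] at h1
      simp only [Option.map_some] at h1
      exact hinj (Option.some.inj h1.symm)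
    exact absurd hrot (by
      intro hc
      exact not_prim_of_rotate_aux a l hl1 hlr hc hprim)
  · intro hl
    subst hl
    intro i hi
    have hkey : (((a.length:ℤ) - (i:ℤ) - 1) % (a.length:ℤ)).toNat = a.length - 1 - i := by
      have h1 : ((a.length:ℤ) - (i:ℤ) - 1) % (a.length:ℤ) = (a.length:ℤ) - (i:ℤ) - 1 :=
        Int.emod_eq_of_lt (by push_cast; omega) (by push_cast; omega)
      rw [h1]; omega
    rw [hkey]
    exact hTi i hi
end

section
/- (Lemma 3.4.) For every q ≥ 1 and every f ∈ N̂_σ(q−1), one has Ψ̂_n(∂_q(f)) = ∂_q(Ψ̂_n(f)); that is, the symbolic derivation ∂_q : N̂_σ(q−1) → N̂_σ(q) commutes with the evaluation homomorphisms Ψ̂_n. In particular, if Ψ̂_n(f) = 0 for all n ≥ 1, then Ψ̂_n(∂_q(f)) = 0 for all n ≥ 1. -/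
/-!
`Ψ̂_n(σ_t(ā))` is the coefficient of `λ^t` in `det(1 + λ X_a)`, the reversed characteristic
polynomial of `-X_a`; this also accounts for the truncation at `t > n`, where those coefficients
vanish. Both `Ψ̂_n ∘ ∂_q` and `∂_q ∘ Ψ̂_n` satisfy the Leibniz rule along `Ψ̂_n`, so it suffices
to compare them on the generators `σ_t(ā)`. Let `c_k` be the coefficients of `det M`,
`M = 1 - λA`, and `D` a derivation. Jacobi's formula `D det M = tr(adj M · DM)`, together with
`adj M ≡ det M · Σ_{i<t} λ^i A^i (mod λ^t)` (from `M · Σ_{i<t} (λA)^i = 1 - (λA)^t`), gives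
`D c_{t+1} = -Σ_{i≤t} tr(A^i · DA) c_{t-i}`. Finally `∂_q X_a = Σ_w X_w` over the words `w` of
`∂_q(a)`, and every word `a^i w` is primitive, as it has exactly one letter of level `q`.
-/

open scoped BigOperators
open Matrix

/-- Base names of letters: `Sum.inl k` is `x_k`, `Sum.inr (k, s)` is `y_{ks}`. -/
abbrev HBase (d : ℕ) := Fin d ⊕ (Fin d × ℕ+)

/-- Letters of `M̂`: a base name together with a flag marking the transpose. -/
abbrev HLetter (d : ℕ) := HBase d × Bool

/-- The involution on letters: `z ↦ z^T`, `z^T ↦ z`. -/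
def hTau {d : ℕ} (l : HLetter d) : HLetter d := (l.1, !l.2)

/-- The level of a letter: `0` for `x_k`, `x_k^T`, and `s` for `y_{ks}`, `y_{ks}^T`.
A word lies in `M̂(q)` iff all its letters have level `≤ q`. -/
def letterLevel {d : ℕ} (l : HLetter d) : ℕ :=
  match l.1 with
  | Sum.inl _ => 0
  | Sum.inr (_, s) => s

/-- `a ∼ b`: `b` is a cyclic permutation of `a` or of `a^T`. -/
def simRel {A : Type*} (τ : A → A) (a b : List A) : Prop :=
  List.IsRotated a b ∨ List.IsRotated a (wordT τ b)

/-- Primitive words in `M̂`. -/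
def PrimWordH (d : ℕ) := {w : List (HLetter d) // WPrimitive w}

/-- `∼`-equivalence classes of primitive words of `M̂`. -/
def WClsH (d : ℕ) := Quot (fun a b : PrimWordH d => simRel hTau a.1 b.1)

/-- The polynomial algebra `N̂_σ` on indeterminates `σ_t(ā)`, `t ≥ 1`,
`ā` a `∼`-class of primitive words of `M̂`. -/
abbrev NsigmaH (F : Type*) [CommSemiring F] (d : ℕ) := MvPolynomial (ℕ+ × WClsH d) F

/-- `tr(w) = σ_1(w̄)` for a primitive word `w` (and junk value `0` otherwise; all words
to which `tr` is applied below are primitive). -/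
noncomputable def trW (F : Type*) [CommSemiring F] {d : ℕ} (w : List (HLetter d)) :
    NsigmaH F d := by
  classical exact
    if h : WPrimitive w then MvPolynomial.X (1, Quot.mk _ (⟨w, h⟩ : PrimWordH d)) else 0

/-- `σ_t(ā)` as an element of `N̂_σ`, with the convention `σ_0 = 1`. -/
noncomputable def sigVar (F : Type*) [CommSemiring F] {d : ℕ} (t : ℕ) (c : WClsH d) :
    NsigmaH F d :=
  if h : 0 < t then MvPolynomial.X ((⟨t, h⟩ : ℕ+), c) else 1

/-- The list of words occurring in `∂_q(a) = Σ_j a_1 ⋯ ∂_q(a_j) ⋯ a_r` (a summand for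
each position `j` holding a letter `x_k` or `x_k^T`, which is replaced by `y_{kq}` or
`y_{kq}^T`; positions holding `y`-letters contribute `0` and are omitted). -/
def derivWords {d : ℕ} (q : ℕ+) (a : List (HLetter d)) : List (List (HLetter d)) :=
  (List.range a.length).filterMap fun j =>
    match a[j]? with
    | some (Sum.inl k, b) => some (a.set j (Sum.inr (k, q), b))
    | _ => none

/-- The value of the symbolic derivation `∂_q` on the indeterminate `σ_t(ā)`:
`∂_q(σ_t(a)) = Σ_{i=0}^{t-1} (-1)^i tr(a^i ∂_q(a)) σ_{t-i-1}(a)`. -/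
noncomputable def dVal (F : Type*) [CommRing F] {d : ℕ} (q : ℕ+)
    (v : ℕ+ × WClsH d) : NsigmaH F d :=
  ∑ i ∈ Finset.range (v.1 : ℕ),
    (-1 : NsigmaH F d) ^ i *
      ((derivWords q (Quot.out v.2).1).map
          (fun w => trW F (wpow (Quot.out v.2).1 i ++ w))).sum *
        sigVar F ((v.1 : ℕ) - i - 1) v.2

/-- The symbolic derivation `∂_q : N̂_σ → N̂_σ` (defined on indeterminates by `dVal` and
extended by linearity and the Leibniz rule). -/
noncomputable def DS (F : Type*) [CommRing F] (d : ℕ) (q : ℕ+) :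
    Derivation F (NsigmaH F d) (NsigmaH F d) :=
  MvPolynomial.mkDerivation F (dVal F q)

/-- Variables of the polynomial ring `R̂_n`: `Sum.inl (i,j,k)` is `x_{ij}(k)` and
`Sum.inr (i,j,k,s)` is `y_{ij}(k,s)`. -/
abbrev VarHat (n d : ℕ) := (Fin n × Fin n × Fin d) ⊕ (Fin n × Fin n × Fin d × ℕ+)

/-- The polynomial ring `R̂_n = F[x_{ij}(k), y_{ij}(k,s)]`. -/
abbrev Rhat (F : Type*) [CommSemiring F] (n d : ℕ) := MvPolynomial (VarHat n d) F

/-- The derivation `∂_q(f) = Σ_k Σ_{i,j} (∂f/∂x_{ij}(k))·y_{ij}(k,q)` on `R̂_n`. -/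
noncomputable def Dq (F : Type*) [Field F] (n d : ℕ) (q : ℕ+) (f : Rhat F n d) :
    Rhat F n d :=
  ∑ k : Fin d, ∑ i : Fin n, ∑ j : Fin n,
    MvPolynomial.pderiv (Sum.inl (i, j, k)) f * MvPolynomial.X (Sum.inr (i, j, k, q))

/-- The matrix of a letter: generic matrices `X_k`, `Y_{ks}` and their transposes. -/
noncomputable def hLetterMat (F : Type*) [Field F] (n d : ℕ) (l : HLetter d) :
    Matrix (Fin n) (Fin n) (Rhat F n d) :=
  match l with
  | (Sum.inl k, false) => Matrix.of fun i j => MvPolynomial.X (Sum.inl (i, j, k))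
  | (Sum.inl k, true) => (Matrix.of fun i j =>
      (MvPolynomial.X (Sum.inl (i, j, k)) : Rhat F n d))ᵀ
  | (Sum.inr (k, s), false) => Matrix.of fun i j => MvPolynomial.X (Sum.inr (i, j, k, s))
  | (Sum.inr (k, s), true) => (Matrix.of fun i j =>
      (MvPolynomial.X (Sum.inr (i, j, k, s)) : Rhat F n d))ᵀ

/-- The matrix `X_a` of a word `a = a_1 ⋯ a_r` of `M̂`. -/
noncomputable def hWordMat (F : Type*) [Field F] (n d : ℕ) (w : List (HLetter d)) :
    Matrix (Fin n) (Fin n) (Rhat F n d) :=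
  (w.map (hLetterMat F n d)).prod

/-- `σ_t(A)`: the coefficient of `λ^{n-t}` in `det(A + λE)`. -/
noncomputable def msigma {R : Type*} [CommRing R] {ι : Type*} [Fintype ι] [DecidableEq ι]
    (t : ℕ) (A : Matrix ι ι R) : R :=
  ((A.map Polynomial.C + (Polynomial.X : Polynomial R) • 1).det).coeff (Fintype.card ι - t)

/-- The evaluation homomorphism `Ψ̂_n : N̂_σ → R̂_n`, sending `σ_t(ā)` to `σ_t(X_a)` if
`t ≤ n` and to `0` otherwise (it does not depend on the representative of `ā`). -/
noncomputable def PsiHat (F : Type*) [Field F] (n d : ℕ) :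
    NsigmaH F d →ₐ[F] Rhat F n d :=
  MvPolynomial.aeval fun v : ℕ+ × WClsH d =>
    if (v.1 : ℕ) ≤ n then msigma v.1 (hWordMat F n d (Quot.out v.2).1) else 0

open Polynomial

theorem Matrix.adjugate_one_sub_eq {R : Type*} [CommRing R] {ι : Type*} [Fintype ι]
    [DecidableEq ι] (N : Matrix ι ι R) (t : ℕ) :
    (1 - N).adjugate = (1 - N).det • ∑ i ∈ Finset.range t, N ^ i + (1 - N).adjugate * N ^ t :=
  calc (1 - N).adjugate
      = (1 - N).adjugate * ((1 - N) * ∑ i ∈ Finset.range t, N ^ i + N ^ t) := by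
        rw [mul_neg_geom_sum, sub_add_cancel, Matrix.mul_one]
    _ = _ := by
        rw [Matrix.mul_add, ← Matrix.mul_assoc, adjugate_mul, Matrix.smul_mul, Matrix.one_mul]

namespace Derivation

variable {R S : Type*} [CommRing R] [CommRing S] [Algebra R S] (D : Derivation R S S)

theorem map_finset_prod {ι : Type*} [DecidableEq ι] (s : Finset ι) (f : ι → S) :
    D (∏ i ∈ s, f i) = ∑ i ∈ s, (∏ j ∈ s.erase i, f j) * D (f i) := by
  induction s using Finset.induction_on with
  | empty => simp
  | insert a s ha ih =>
    rw [Finset.prod_insert ha, D.leibniz, ih, Finset.sum_insert ha, Finset.erase_insert ha,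
      smul_eq_mul, smul_eq_mul, Finset.mul_sum, add_comm]
    congr 1
    refine Finset.sum_congr rfl fun i hi => ?_
    rw [Finset.erase_insert_of_ne (ne_of_mem_of_not_mem hi ha).symm,
      Finset.prod_insert fun h => ha (Finset.mem_of_mem_erase h)]
    ring

theorem map_det {ι : Type*} [Fintype ι] [DecidableEq ι] (M : Matrix ι ι S) :
    D M.det = trace (M.adjugate * M.map D) := by
  have hcol : ∀ i, (M.updateCol i fun r => D (M r i)).det = ∑ r, M.adjugate i r * D (M r i) :=
    fun i => by rw [← cramer_apply, cramer_eq_adjugate_mulVec]; rfl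
  calc D M.det
      = ∑ σ : Equiv.Perm ι, ∑ i, Equiv.Perm.sign σ •
          ((∏ j ∈ Finset.univ.erase i, M (σ j) j) * D (M (σ i) i)) := by
        simp only [det_apply, map_sum, Units.smul_def, map_zsmul, map_finset_prod, Finset.smul_sum]
    _ = ∑ i, (M.updateCol i fun r => D (M r i)).det := by
        rw [Finset.sum_comm]
        refine Finset.sum_congr rfl fun i _ => ?_
        rw [det_apply]
        refine Finset.sum_congr rfl fun σ _ => ?_
        rw [← Finset.mul_prod_erase Finset.univ _ (Finset.mem_univ i), updateCol_self, mul_comm,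
          Finset.prod_congr rfl fun j hj => updateCol_ne (Finset.ne_of_mem_erase hj)]
    _ = trace (M.adjugate * M.map D) := by
        simp only [hcol, trace, diag_apply, mul_apply, map_apply]

theorem map_matrix_mul {ι : Type*} [Fintype ι] (M N : Matrix ι ι S) :
    (M * N).map D = M.map D * N + M * N.map D := by
  ext i j
  simp only [map_apply, mul_apply, map_sum, Matrix.add_apply, ← Finset.sum_add_distrib]
  exact Finset.sum_congr rfl fun k _ => by rw [D.leibniz, smul_eq_mul, smul_eq_mul]; ring

theorem map_matrix_one {ι : Type*} [DecidableEq ι] : (1 : Matrix ι ι S).map D = 0 := by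
  ext i j
  rw [map_apply, one_apply]
  split_ifs <;> simp

noncomputable def mapCoeffsSelf : Derivation R S[X] S[X] :=
  PolynomialModule.equivPolynomialSelf.compDer D.mapCoeffs

theorem coeff_mapCoeffsSelf (p : S[X]) (k : ℕ) : (D.mapCoeffsSelf p).coeff k = D (p.coeff k) :=
  rfl

theorem mapCoeffsSelf_monomial (k : ℕ) (a : S) :
    D.mapCoeffsSelf (monomial k a) = monomial k (D a) := by
  ext m
  rw [coeff_mapCoeffsSelf, coeff_monomial, coeff_monomial]
  split_ifs <;> simp

theorem map_mapCoeffsSelf_one_sub_X_smul {ι : Type*} [DecidableEq ι] (A : Matrix ι ι S) :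
    (1 - (X : S[X]) • A.map C).map D.mapCoeffsSelf = -((X : S[X]) • (A.map D).map C) := by
  refine Matrix.ext fun i j => ?_
  have hXC : D.mapCoeffsSelf (X * C (A i j)) = X * C (D (A i j)) := by
    rw [X_mul_C, C_mul_X_eq_monomial, mapCoeffsSelf_monomial, ← C_mul_X_eq_monomial, X_mul_C]
  simp only [map_apply, Matrix.sub_apply, one_apply, Matrix.smul_apply, smul_eq_mul, map_sub,
    hXC, Matrix.neg_apply]
  split_ifs <;> simp

theorem coeff_charpolyRev_succ {ι : Type*} [Fintype ι] [DecidableEq ι] (A : Matrix ι ι S)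
    (t : ℕ) :
    D (A.charpolyRev.coeff (t + 1)) =
      -∑ i ∈ Finset.range (t + 1), trace (A ^ i * A.map D) * A.charpolyRev.coeff (t - i) := by
  set M := 1 - (X : S[X]) • A.map C
  have htrace_C : ∀ N : Matrix ι ι S, trace (N.map C) = C (trace N) := fun N =>
    (AddMonoidHom.map_trace (C : S →+* S[X]) N).symm
  have hjacobi : D.mapCoeffsSelf A.charpolyRev = -(X * trace (M.adjugate * (A.map D).map C)) := by
    rw [charpolyRev, D.mapCoeffsSelf.map_det, map_mapCoeffsSelf_one_sub_X_smul, Matrix.mul_neg,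
      Matrix.mul_smul, trace_neg, trace_smul, smul_eq_mul]
  have hsplit : trace (M.adjugate * (A.map D).map C) =
      A.charpolyRev * ∑ i ∈ Finset.range (t + 1), X ^ i * C (trace (A ^ i * A.map D)) +
        X ^ (t + 1) * trace (M.adjugate * (A ^ (t + 1)).map C * (A.map D).map C) := by
    have hpow (k : ℕ) : ((X : S[X]) • A.map C) ^ k = (X : S[X]) ^ k • (A ^ k).map C := by
      rw [_root_.smul_pow, ← Matrix.map_pow]
    conv_lhs => rw [adjugate_one_sub_eq ((X : S[X]) • A.map C) (t + 1)]
    simp only [hpow]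
    rw [show M.det = A.charpolyRev from rfl, Matrix.add_mul, trace_add, Matrix.smul_mul,
      trace_smul, smul_eq_mul, Matrix.sum_mul, trace_sum, Matrix.mul_smul, Matrix.smul_mul,
      trace_smul, smul_eq_mul]
    congr 2
    refine Finset.sum_congr rfl fun i _ => ?_
    rw [Matrix.smul_mul, trace_smul, ← Matrix.map_mul, htrace_C, smul_eq_mul]
  rw [← coeff_mapCoeffsSelf, hjacobi, hsplit, coeff_neg, coeff_X_mul, coeff_add,
    coeff_X_pow_mul', if_neg (by omega), add_zero, Finset.mul_sum, finsetSum_coeff]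
  congr 1
  refine Finset.sum_congr rfl fun i hi => ?_
  rw [← mul_assoc, coeff_mul_C, coeff_mul_X_pow', if_pos (by simpa [Nat.lt_succ_iff] using hi),
    mul_comm]

theorem coeff_charpolyRev_neg_succ {ι : Type*} [Fintype ι] [DecidableEq ι] (A : Matrix ι ι S)
    (t : ℕ) :
    D ((-A).charpolyRev.coeff (t + 1)) = ∑ i ∈ Finset.range (t + 1),
      (-1) ^ i * trace (A ^ i * A.map D) * (-A).charpolyRev.coeff (t - i) := by
  rw [D.coeff_charpolyRev_succ, ← Finset.sum_neg_distrib]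
  refine Finset.sum_congr rfl fun i _ => ?_
  have hpow : (-A) ^ i = (-1 : S) ^ i • A ^ i := by rw [← neg_one_smul S A, _root_.smul_pow]
  rw [hpow, Matrix.map_neg _ (map_neg D), Matrix.mul_neg, Matrix.smul_mul, trace_neg, trace_smul,
    smul_eq_mul]
  ring

end Derivation

theorem msigma_eq_coeff_charpoly_neg {R : Type*} [CommRing R] {ι : Type*} [Fintype ι]
    [DecidableEq ι] (A : Matrix ι ι R) (s : ℕ) :
    msigma s A = (-A).charpoly.coeff (Fintype.card ι - s) := by
  have hcharmatrix : A.map C + (X : R[X]) • (1 : Matrix ι ι R[X]) = charmatrix (-A) := by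
    ext i j : 1
    by_cases h : i = j <;> simp [one_apply, h, add_comm]
  rw [msigma, hcharmatrix, charpoly]

theorem coeff_charpolyRev_neg {R : Type*} [CommRing R] {ι : Type*} [Fintype ι] [DecidableEq ι]
    (A : Matrix ι ι R) (s : ℕ) :
    (-A).charpolyRev.coeff s = if s ≤ Fintype.card ι then msigma s A else 0 := by
  nontriviality R
  rw [← reverse_charpoly, coeff_reverse, charpoly_natDegree_eq_dim]
  split_ifs with hs
  · rw [revAt_le hs, msigma_eq_coeff_charpoly_neg]
  · rw [revAt_eq_self_of_lt (not_le.mp hs)]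
    exact coeff_eq_zero_of_natDegree_lt (by rw [charpoly_natDegree_eq_dim]; omega)

section WordMatrices

variable (F : Type*) [Field F] (n d : ℕ)

theorem hWordMat_cons (l : HLetter d) (w : List (HLetter d)) :
    hWordMat F n d (l :: w) = hLetterMat F n d l * hWordMat F n d w := by
  rw [hWordMat, hWordMat, List.map_cons, List.prod_cons]

theorem hWordMat_append (u w : List (HLetter d)) :
    hWordMat F n d (u ++ w) = hWordMat F n d u * hWordMat F n d w := by
  rw [hWordMat, hWordMat, hWordMat, List.map_append, List.prod_append]

theorem hWordMat_wpow (w : List (HLetter d)) (m : ℕ) :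
    hWordMat F n d (wpow w m) = hWordMat F n d w ^ m := by
  induction m with
  | zero => rfl
  | succ m ih =>
    rw [wpow, List.replicate_succ, List.flatten_cons, hWordMat_append, ← wpow, ih, pow_succ']

theorem hLetterMat_hTau (l : HLetter d) :
    hLetterMat F n d (hTau l) = (hLetterMat F n d l)ᵀ := by
  rcases l with ⟨k | ⟨k, s⟩, _ | _⟩ <;> simp [hTau, hLetterMat]

theorem hWordMat_wordT (w : List (HLetter d)) :
    hWordMat F n d (wordT hTau w) = (hWordMat F n d w)ᵀ := by
  simp only [wordT, hWordMat, transpose_list_prod, List.map_reverse, List.map_map]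
  congr 2
  exact List.map_congr_left fun l _ => hLetterMat_hTau F n d l

theorem trace_hWordMat_rotate (w : List (HLetter d)) (m : ℕ) :
    trace (hWordMat F n d (w.rotate m)) = trace (hWordMat F n d w) := by
  rw [List.rotate_eq_drop_append_take_mod, hWordMat_append, trace_mul_comm, ← hWordMat_append,
    List.take_append_drop]

theorem trace_hWordMat_eq_of_simRel {u w : List (HLetter d)} (h : simRel hTau u w) :
    trace (hWordMat F n d u) = trace (hWordMat F n d w) := by
  rcases h with ⟨m, hm⟩ | ⟨m, hm⟩
  · rw [← hm, trace_hWordMat_rotate]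
  · rw [← trace_transpose (hWordMat F n d w), ← hWordMat_wordT, ← hm, trace_hWordMat_rotate]

theorem trace_hWordMat_out_mk (u : PrimWordH d) :
    trace (hWordMat F n d (Quot.out (Quot.mk _ u : WClsH d)).1) = trace (hWordMat F n d u.1) :=
  congrArg (Quot.lift (fun w : PrimWordH d => trace (hWordMat F n d w.1))
    fun _ _ h => trace_hWordMat_eq_of_simRel F n d h) (Quot.out_eq (Quot.mk _ u))

end WordMatrices

section Derivative

variable (F : Type*) [Field F] (n d : ℕ) (q : ℕ+)

noncomputable def dqDerivation : Derivation F (Rhat F n d) (Rhat F n d) :=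
  ∑ k : Fin d, ∑ i : Fin n, ∑ j : Fin n,
    (MvPolynomial.X (Sum.inr (i, j, k, q)) : Rhat F n d) •
      MvPolynomial.pderiv (Sum.inl (i, j, k))

theorem dqDerivation_apply (f : Rhat F n d) : dqDerivation F n d q f = Dq F n d q f := by
  have hcoe {ι : Type} (s : Finset ι) (D : ι → Derivation F (Rhat F n d) (Rhat F n d)) :
      ⇑(∑ k ∈ s, D k) = ∑ k ∈ s, ⇑(D k) := map_sum Derivation.coeFnAddMonoidHom D s
  simp only [dqDerivation, Dq, hcoe, Finset.sum_apply, Derivation.smul_apply, smul_eq_mul,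
    mul_comm]

theorem dqDerivation_X_inl (i j : Fin n) (k : Fin d) :
    dqDerivation F n d q (MvPolynomial.X (Sum.inl (i, j, k))) =
      MvPolynomial.X (Sum.inr (i, j, k, q)) := by
  simp [dqDerivation_apply, Dq, MvPolynomial.pderiv_X, Pi.single_apply, ite_and]

theorem dqDerivation_X_inr (v : Fin n × Fin n × Fin d × ℕ+) :
    dqDerivation F n d q (MvPolynomial.X (Sum.inr v)) = 0 := by
  simp [dqDerivation_apply, Dq, MvPolynomial.pderiv_X]

theorem derivWords_cons_inl (k : Fin d) (b : Bool) (w : List (HLetter d)) :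
    derivWords q ((Sum.inl k, b) :: w) =
      ((Sum.inr (k, q), b) :: w) :: (derivWords q w).map ((Sum.inl k, b) :: ·) := by
  rw [derivWords, derivWords, List.length_cons, List.range_succ_eq_map, List.filterMap_cons]
  simp only [List.getElem?_cons_zero, List.set_cons_zero, List.filterMap_map,
    List.map_filterMap]
  congr 1
  refine List.filterMap_congr fun j _ => ?_
  rcases h : w[j]? with _ | ⟨⟨_ | _, _⟩⟩ <;> simp [h]

theorem derivWords_cons_inr (ks : Fin d × ℕ+) (b : Bool) (w : List (HLetter d)) :
    derivWords q ((Sum.inr ks, b) :: w) = (derivWords q w).map ((Sum.inr ks, b) :: ·) := by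
  rw [derivWords, derivWords, List.length_cons, List.range_succ_eq_map, List.filterMap_cons]
  simp only [List.getElem?_cons_zero, List.filterMap_map, List.map_filterMap]
  refine List.filterMap_congr fun j _ => ?_
  rcases h : w[j]? with _ | ⟨⟨_ | _, _⟩⟩ <;> simp [h]

theorem map_dqDerivation_hLetterMat_inl (k : Fin d) (b : Bool) :
    (hLetterMat F n d (Sum.inl k, b)).map (dqDerivation F n d q) =
      hLetterMat F n d (Sum.inr (k, q), b) := by
  cases b <;> ext i j <;> simp [hLetterMat, dqDerivation_X_inl]

theorem map_dqDerivation_hLetterMat_inr (ks : Fin d × ℕ+) (b : Bool) :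
    (hLetterMat F n d (Sum.inr ks, b)).map (dqDerivation F n d q) = 0 := by
  cases b <;> ext i j <;> simp [hLetterMat, dqDerivation_X_inr]

theorem map_dqDerivation_hWordMat (w : List (HLetter d)) :
    (hWordMat F n d w).map (dqDerivation F n d q) =
      ((derivWords q w).map (hWordMat F n d)).sum := by
  induction w with
  | nil => exact (dqDerivation F n d q).map_matrix_one
  | cons l w ih =>
    have hprefix : ((derivWords q w).map (l :: ·)).map (hWordMat F n d) =
        (derivWords q w).map fun u => hLetterMat F n d l * hWordMat F n d u := by
      simp only [List.map_map, Function.comp_def, hWordMat_cons]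
    rcases l with ⟨k | ks, b⟩
    · rw [hWordMat_cons, Derivation.map_matrix_mul, derivWords_cons_inl, List.map_cons,
        List.sum_cons, hprefix, List.sum_map_mul_left, ih, map_dqDerivation_hLetterMat_inl,
        hWordMat_cons]
    · rw [hWordMat_cons, Derivation.map_matrix_mul, derivWords_cons_inr, hprefix,
        List.sum_map_mul_left, ih, map_dqDerivation_hLetterMat_inr, Matrix.zero_mul, zero_add]

end Derivative

theorem countP_wpow {A : Type*} (p : A → Bool) (e : List A) (m : ℕ) :
    (wpow e m).countP p = m * e.countP p := by
  rw [wpow, List.countP_flatten, List.map_replicate, List.sum_replicate, smul_eq_mul]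

theorem WPrimitive.of_countP_eq_one {A : Type*} {w : List A} (p : A → Bool)
    (h : w.countP p = 1) : WPrimitive w := by
  refine ⟨fun hw => by simp [hw] at h, fun e m hm hw => ?_⟩
  rw [hw, countP_wpow] at h
  have := Nat.eq_one_of_mul_eq_one_right h
  omega

theorem exists_eq_set_of_mem_derivWords {d : ℕ} {q : ℕ+} {w u : List (HLetter d)}
    (hu : u ∈ derivWords q w) :
    ∃ j, ∃ k b, w[j]? = some (Sum.inl k, b) ∧ u = w.set j (Sum.inr (k, q), b) := by
  obtain ⟨j, -, hj⟩ := List.mem_filterMap.mp hu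
  rcases h : w[j]? with _ | ⟨⟨k | _, b⟩⟩ <;>
    simp only [h, reduceCtorEq, Option.some.injEq] at hj
  exact ⟨j, k, b, h, hj.symm⟩

theorem wPrimitive_wpow_append_of_mem_derivWords {d : ℕ} {q : ℕ+} {w u : List (HLetter d)}
    (hw : ∀ l ∈ w, letterLevel l < (q : ℕ)) (hu : u ∈ derivWords q w) (i : ℕ) :
    WPrimitive (wpow w i ++ u) := by
  let top : HLetter d → Bool := fun l => letterLevel l = (q : ℕ)
  have hw0 : w.countP top = 0 :=
    List.countP_eq_zero.mpr fun l hl => by simpa [top] using (hw l hl).ne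
  obtain ⟨j, k, b, hj, rfl⟩ := exists_eq_set_of_mem_derivWords hu
  refine WPrimitive.of_countP_eq_one top ?_
  obtain ⟨hjlen, hwj⟩ := List.getElem?_eq_some_iff.mp hj
  rw [List.countP_append, countP_wpow, hw0, List.countP_set hjlen, hw0, hwj]
  simp [top, letterLevel]

theorem AlgHom.map_derivation_eq_of_mem_adjoin {R A B : Type*} [CommSemiring R]
    [CommSemiring A] [CommSemiring B] [Algebra R A] [Algebra R B] (φ : A →ₐ[R] B)
    (D : Derivation R A A) (D' : Derivation R B B) {s : Set A}
    (hs : ∀ x ∈ s, φ (D x) = D' (φ x)) {x : A} (hx : x ∈ Algebra.adjoin R s) :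
    φ (D x) = D' (φ x) := by
  induction hx using Algebra.adjoin_induction with
  | mem x hx => exact hs x hx
  | algebraMap r => simp
  | add x y _ _ hx hy => simp only [map_add, hx, hy]
  | mul x y _ _ hx hy =>
    simp only [Derivation.leibniz, map_add, smul_eq_mul, map_mul, hx, hy]

section Evaluation

variable (F : Type*) [Field F] (n d : ℕ) (q : ℕ+)

theorem PsiHat_X (v : ℕ+ × WClsH d) :
    PsiHat F n d (MvPolynomial.X v) =
      (-hWordMat F n d (Quot.out v.2).1).charpolyRev.coeff v.1 := by
  rw [PsiHat, MvPolynomial.aeval_X, coeff_charpolyRev_neg, Fintype.card_fin]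

theorem PsiHat_sigVar (s : ℕ) (c : WClsH d) :
    PsiHat F n d (sigVar F s c) = (-hWordMat F n d (Quot.out c).1).charpolyRev.coeff s := by
  rcases Nat.eq_zero_or_pos s with rfl | hs
  · rw [sigVar, dif_neg (lt_irrefl 0), map_one, coeff_zero_eq_eval_zero, eval_charpolyRev]
  · rw [sigVar, dif_pos hs, PsiHat_X, PNat.mk_coe]

theorem PsiHat_trW {u : List (HLetter d)} (hu : WPrimitive u) :
    PsiHat F n d (trW F u) = trace (hWordMat F n d u) := by
  rw [trW, dif_pos hu, PsiHat_X, PNat.one_coe, coeff_charpolyRev_eq_neg_trace, trace_neg,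
    neg_neg]
  exact trace_hWordMat_out_mk F n d ⟨u, hu⟩

theorem PsiHat_DS_X (v : ℕ+ × WClsH d)
    (hv : ∀ l ∈ (Quot.out v.2).1, letterLevel l < (q : ℕ)) :
    PsiHat F n d (DS F d q (MvPolynomial.X v)) =
      dqDerivation F n d q (PsiHat F n d (MvPolynomial.X v)) := by
  obtain ⟨⟨t, ht⟩, c⟩ := v
  obtain ⟨t, rfl⟩ := Nat.exists_eq_add_one_of_ne_zero ht.ne'
  set w := (Quot.out c).1
  rw [DS, MvPolynomial.mkDerivation_X, dVal, PsiHat_X, map_sum, PNat.mk_coe,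
    Derivation.coeff_charpolyRev_neg_succ]
  refine Finset.sum_congr rfl fun i _ => ?_
  dsimp only
  have htrace : ∀ u ∈ derivWords q w,
      PsiHat F n d (trW F (wpow w i ++ u)) = trace (hWordMat F n d w ^ i * hWordMat F n d u) :=
    fun u hu => by
      rw [PsiHat_trW F n d (wPrimitive_wpow_append_of_mem_derivWords hv hu i), hWordMat_append,
        hWordMat_wpow]
  rw [map_mul, map_mul, map_pow, map_neg, map_one, map_list_sum, List.map_map, PsiHat_sigVar,
    map_dqDerivation_hWordMat, ← List.sum_map_mul_left _ _ (hWordMat F n d w ^ i),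
    trace_list_sum, List.map_map, Nat.sub_right_comm, Nat.add_sub_cancel]
  congr 3
  exact List.map_congr_left htrace

end Evaluation

theorem PsiHat_DS_comm_general (F : Type*) [Field F]
    (d : ℕ) (q : ℕ+) (f : NsigmaH F d)
    (hlev : ∀ u ∈ f.support, ∀ v ∈ u.support, ∀ l ∈ (Quot.out v.2).1,
      letterLevel l ≤ (q : ℕ) - 1) :
    (∀ n : ℕ, 1 ≤ n → PsiHat F n d (DS F d q f) = Dq F n d q (PsiHat F n d f)) ∧
      ((∀ n : ℕ, 1 ≤ n → PsiHat F n d f = 0) →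
        ∀ n : ℕ, 1 ≤ n → PsiHat F n d (DS F d q f) = 0) := by
  have hf : f ∈ Algebra.adjoin F (MvPolynomial.X '' {v : ℕ+ × WClsH d |
      ∀ l ∈ (Quot.out v.2).1, letterLevel l < (q : ℕ)}) := by
    rw [← MvPolynomial.supported_eq_adjoin_X, MvPolynomial.mem_supported]
    intro v hv
    obtain ⟨u, hu, hvu⟩ := (MvPolynomial.mem_vars_iff_mem_support v).mp hv
    exact fun l hl => Nat.lt_of_le_pred q.pos (hlev u hu v hvu l hl)
  have hcomm (n : ℕ) : PsiHat F n d (DS F d q f) = Dq F n d q (PsiHat F n d f) := by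
    rw [← dqDerivation_apply]
    refine (PsiHat F n d).map_derivation_eq_of_mem_adjoin _ _ ?_ hf
    rintro _ ⟨v, hv, rfl⟩
    exact PsiHat_DS_X F n d q v hv
  refine ⟨fun n _ => hcomm n, fun h0 n hn => ?_⟩
  rw [hcomm n, h0 n hn, ← dqDerivation_apply, map_zero]

/-- **Lemma 3.4.** For `q ≥ 1` and `f ∈ N̂_σ(q-1)` (i.e. every word occurring in `f`
has all letters of level `≤ q-1`), the symbolic derivation commutes with the
evaluation homomorphisms: `Ψ̂_n(∂_q(f)) = ∂_q(Ψ̂_n(f))` for every `n ≥ 1`.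
In particular, if `f` is a free relation then so is `∂_q(f)`. -/
theorem PsiHat_DS_comm (F : Type*) [Field F] (hchar : ringChar F ≠ 2)
    (d : ℕ) (hd : 1 ≤ d) (q : ℕ+) (f : NsigmaH F d)
    (hlev : ∀ u ∈ f.support, ∀ v ∈ u.support, ∀ l ∈ (Quot.out v.2).1,
      letterLevel l ≤ (q : ℕ) - 1) :
    (∀ n : ℕ, 1 ≤ n → PsiHat F n d (DS F d q f) = Dq F n d q (PsiHat F n d f)) ∧
      ((∀ n : ℕ, 1 ≤ n → PsiHat F n d f = 0) →
        ∀ n : ℕ, 1 ≤ n → PsiHat F n d (DS F d q f) = 0) :=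
  PsiHat_DS_comm_general F d q f hlev
end

section
/- (Lemma 3.5.) Let q ≥ 1 and let a be a primitive word in M̂(q−1) such that deg_{x_k}(a) ≠ 0 for some 1 ≤ k ≤ d and such that no cyclic permutation of a equals a^T. Let f_1,…,f_s be pairwise distinct monomials f_i = Π_{j=1}^{r_i} σ_{t_{ij}}(ā)^{m_{ij}} in N̂_σ(q−1), where r_i > 0, t_{i1} > ⋯ > t_{i r_i} ≥ 1, and each m_{ij} > 0 is not divisible by p = char F. Then ∂_q(f_1),…,∂_q(f_s) are linearly independent over F in N̂_σ(q). -/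
/-!
Let `A` be the representative of `ā` used by `∂_q` and `w₀` one of the words of `∂_q(A)`. Every
word `A^ℓ w` occurring in `∂_q(σ_t(ā))` has exactly one letter of level `q`, so it is primitive
and not equivalent to `A`; moreover, as `A` is primitive and `A ≁_c A^T`, the classes of the
`A^ℓ w` are pairwise distinct: erasing the derivative turns a rotation between two of them into a
rotation of `A^{ℓ+1}`, and a transposition into `A ∼_c A^T`. Hence `∂/∂tr(A^{n-1} w₀) ∘ ∂_q` sends
a monomial in the `σ_t(ā)`, `t ≤ n`, to `(-1)^{n-1} ∂/∂σ_n(ā)` of it. Taking `n` the largest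
`t_{i1}` among the `f_i` of a vanishing combination of the `∂_q(f_i)` leaves a vanishing
combination of the distinct monomials `∂f_i/∂σ_n(ā) = m_{i1} f_i / σ_n(ā)`, where `m_{i1} ≠ 0`
in `F`.
-/

open scoped BigOperators
open Matrix

open MvPolynomial

namespace WordDeriv

section Words

variable {α : Type*}

theorem wpow_succ (e : List α) (m : ℕ) : wpow e (m + 1) = e ++ wpow e m := by
  simp [wpow, List.replicate_succ]

theorem wpow_succ' (e : List α) (m : ℕ) : wpow e (m + 1) = wpow e m ++ e := by
  simp [wpow, List.replicate_succ']

theorem length_wpow (e : List α) (m : ℕ) : (wpow e m).length = m * e.length := by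
  simp [wpow]

theorem mem_of_mem_wpow {x : α} {e : List α} {m : ℕ} (h : x ∈ wpow e m) : x ∈ e := by
  simp only [wpow, List.mem_flatten, List.mem_replicate] at h
  obtain ⟨l, ⟨-, rfl⟩, hx⟩ := h
  exact hx

theorem countP_wpow (p : α → Bool) (e : List α) (m : ℕ) :
    (wpow e m).countP p = m * e.countP p := by
  simp [wpow, List.countP_flatten]

theorem getElem_wpow (e : List α) (m i : ℕ) (h : i < (wpow e m).length) :
    (wpow e m)[i] = e[i % e.length]'(Nat.mod_lt _ (by
      rw [length_wpow] at h; exact Nat.pos_of_ne_zero (by rintro h0; simp [h0] at h))) := by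
  induction m generalizing i with
  | zero => simp [wpow] at h
  | succ m ih =>
    simp only [wpow_succ, List.getElem_append]
    split_ifs with hi
    · simp [Nat.mod_eq_of_lt hi]
    · rw [ih]
      simp [Nat.mod_eq_sub_mod (not_lt.mp hi)]

theorem rotate_wpow (e : List α) (m r : ℕ) : (wpow e m).rotate r = wpow (e.rotate r) m := by
  refine List.ext_getElem (by simp [length_wpow]) fun i h₁ h₂ => ?_
  simp only [List.getElem_rotate, getElem_wpow, List.length_rotate, length_wpow]
  congr 1
  rw [Nat.mod_mod_of_dvd _ (dvd_mul_left _ _), Nat.mod_add_mod]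

theorem wordT_wpow (τ : α → α) (e : List α) (m : ℕ) :
    wordT τ (wpow e m) = wpow (wordT τ e) m := by
  simp [wordT, wpow, List.reverse_flatten, List.map_flatten]

theorem eq_of_wpow_succ_eq {e e' : List α} {m : ℕ} (hlen : e.length = e'.length)
    (h : wpow e (m + 1) = wpow e' (m + 1)) : e = e' := by
  have := congrArg (List.take e.length) h
  rwa [wpow_succ, wpow_succ, List.take_left, hlen, List.take_left] at this

theorem isRotated_of_wpow_succ {e e' : List α} {m : ℕ} (hlen : e.length = e'.length)
    (h : wpow e (m + 1) ~r wpow e' (m + 1)) : e ~r e' := by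
  obtain ⟨r, hr⟩ := h
  rw [rotate_wpow] at hr
  exact ⟨r, eq_of_wpow_succ_eq (by simpa using hlen) hr⟩

theorem rotate_mul_eq_self {l : List α} {k : ℕ} (h : l.rotate k = l) (c : ℕ) :
    l.rotate (c * k) = l := by
  induction c with
  | zero => simp
  | succ c ih => rw [Nat.succ_mul, ← List.rotate_rotate, ih, h]

theorem rotate_gcd_eq_self {l : List α} {a b : ℕ} (ha : l.rotate a = l) (hb : l.rotate b = l) :
    l.rotate (a.gcd b) = l := by
  induction a, b using Nat.gcd.induction with
  | H0 b => simpa using hb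
  | H1 a b _ ih =>
    rw [Nat.gcd_rec]
    refine ih ?_ ha
    rwa [← Nat.div_add_mod b a, ← List.rotate_rotate, mul_comm, rotate_mul_eq_self ha] at hb

theorem eq_wpow_take_of_rotate_eq_self {l : List α} {g : ℕ} (hg : g ∣ l.length)
    (h : l.rotate g = l) : l = wpow (l.take g) (l.length / g) := by
  rcases eq_or_ne l [] with rfl | hl
  · simp [wpow]
  have hgl : g ≤ l.length := Nat.le_of_dvd (List.length_pos_iff.mpr hl) hg
  refine List.ext_getElem (by simp [length_wpow, hgl, Nat.div_mul_cancel hg]) fun i h₁ h₂ => ?_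
  have hi : i % g + i / g * g = i := by rw [mul_comm]; exact Nat.mod_add_div i g
  have hrot := rotate_mul_eq_self h (i / g)
  simp only [getElem_wpow, List.getElem_take, List.length_take, min_eq_left hgl]
  have hlt : i % g < (l.rotate (i / g * g)).length := by
    simpa using (Nat.mod_lt i (Nat.pos_of_dvd_of_pos hg (List.length_pos_iff.mpr hl))).trans_le hgl
  rw [← List.getElem_of_eq hrot hlt, List.getElem_rotate]
  simp only [hi, Nat.mod_eq_of_lt h₁]

theorem _root_.WPrimitive.length_dvd_of_rotate_eq_self {l : List α} (hl : WPrimitive l) {k : ℕ}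
    (h : l.rotate k = l) : l.length ∣ k := by
  set g := k.gcd l.length
  have hg : g ∣ l.length := Nat.gcd_dvd_right k l.length
  have hpow := eq_wpow_take_of_rotate_eq_self hg (rotate_gcd_eq_self h l.rotate_length)
  have hquot : l.length / g < 2 := by
    by_contra! h2
    exact hl.2 _ _ h2 hpow
  have hn : 0 < l.length := List.length_pos_iff.mpr hl.1
  obtain ⟨c, hc⟩ := hg
  rw [hc, Nat.mul_div_cancel_left _ (Nat.pos_of_dvd_of_pos ⟨c, hc⟩ hn)] at hquot
  have hgn : g = l.length := by interval_cases c <;> omega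
  exact hgn ▸ Nat.gcd_dvd_left k l.length

theorem _root_.WPrimitive.of_countP_eq_one_s11 {l : List α} {p : α → Bool} (h : l.countP p = 1) :
    WPrimitive l := by
  refine ⟨by rintro rfl; simp at h, fun e m hm hl => ?_⟩
  rw [hl, countP_wpow] at h
  have := Nat.eq_one_of_mul_eq_one_right h
  omega

end Words

section Transpose

variable {α : Type*} {τ : α → α}

theorem wordT_wordT (hτ : Function.Involutive τ) (w : List α) : wordT τ (wordT τ w) = w := by
  simp [wordT, List.map_reverse, hτ.comp_self]

theorem _root_.List.IsRotated.wordT {u v : List α} (h : u ~r v) : wordT τ u ~r wordT τ v :=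
  h.reverse.map τ

theorem length_eq_of_simRel {u v : List α} (h : simRel τ u v) : u.length = v.length := by
  rcases h with h | h
  · exact h.perm.length_eq
  · simpa [wordT] using h.perm.length_eq

theorem simRel_equivalence (hτ : Function.Involutive τ) : Equivalence (simRel τ) where
  refl u := Or.inl (List.IsRotated.refl u)
  symm {u v} h := by
    rcases h with h | h
    · exact Or.inl h.symm
    · exact Or.inr (by simpa [wordT_wordT hτ] using h.symm.wordT (τ := τ))
  trans {u v x} h₁ h₂ := by
    rcases h₁ with h₁ | h₁ <;> rcases h₂ with h₂ | h₂
    · exact Or.inl (h₁.trans h₂)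
    · exact Or.inr (h₁.trans h₂)
    · exact Or.inr (h₁.trans h₂.wordT)
    · exact Or.inl (by simpa [wordT_wordT hτ] using h₁.trans h₂.wordT)

theorem mem_or_mem_of_simRel (hτ : Function.Involutive τ) {u v : List α} (h : simRel τ u v)
    {x : α} (hx : x ∈ u) : x ∈ v ∨ τ x ∈ v := by
  rcases h with h | h
  · exact Or.inl (h.perm.subset hx)
  · obtain ⟨y, hy, rfl⟩ := by simpa [wordT] using h.perm.subset hx
    exact Or.inr (by rwa [hτ y])

theorem isRotated_wordT_self_of_simRel (hτ : Function.Involutive τ) {u v : List α}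
    (h : simRel τ u v) (hu : u ~r wordT τ u) : v ~r wordT τ v := by
  rcases h with h | h
  · exact h.symm.trans (hu.trans h.wordT)
  · have h' : wordT τ u ~r v := by simpa [wordT_wordT hτ] using h.wordT (τ := τ)
    exact h'.symm.trans (hu.symm.trans h)

end Transpose

theorem linearIndependent_of_triangular {R M N ι κ : Type*} [Ring R] [AddCommGroup M]
    [Module R M] [AddCommGroup N] [Module R N] [Fintype ι] [LinearOrder κ] (key : ι → κ)
    {v : ι → M} (P : κ → M →ₗ[R] N) (h_lt : ∀ i k, key i < k → P k (v i) = 0)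
    (h_eq : ∀ k, LinearIndependent R fun i : {i // key i = k} => P k (v i)) :
    LinearIndependent R v := by
  classical
  rw [Fintype.linearIndependent_iff]
  intro g hg
  by_contra! hne
  obtain ⟨i₀, hi₀, hmax⟩ :=
    Finset.exists_max_image {i | g i ≠ 0} key (by simpa [Finset.Nonempty] using hne)
  have hsum : ∑ i : {i // key i = key i₀}, g i • P (key i₀) (v i) = 0 := by
    have := congrArg (P (key i₀)) hg
    rw [map_sum, map_zero, ← Fintype.sum_subtype_add_sum_subtype (key · = key i₀)] at this
    simp only [map_smul] at this
    rw [← this, left_eq_add]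
    refine Finset.sum_eq_zero fun i _ => ?_
    by_cases hgi : g i = 0
    · simp [hgi]
    · have hlt := (hmax i (by simpa using hgi)).lt_of_ne i.2
      simp [h_lt _ _ hlt]
  exact (by simpa using hi₀ : g i₀ ≠ 0)
    (Fintype.linearIndependent_iff.mp (h_eq (key i₀)) (fun i => g i) hsum ⟨i₀, rfl⟩)

theorem linearIndependent_pderiv_monomial {σ R ι : Type*} [Field R] (x : σ) {s : ι → σ →₀ ℕ}
    (hs : Function.Injective s) (hx : ∀ i, (s i x : R) ≠ 0) :
    LinearIndependent R fun i => pderiv x (monomial (s i) (1 : R)) := by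
  have hle : ∀ i, Finsupp.single x 1 ≤ s i := fun i =>
    Finsupp.single_le_iff.mpr (Nat.one_le_iff_ne_zero.mpr fun h => hx i (by simp [h]))
  have hinj : Function.Injective fun i => s i - Finsupp.single x 1 := fun i j h => hs <| by
    have := congrArg (· + Finsupp.single x 1) h
    simp only at this
    rwa [tsub_add_cancel_of_le (hle i), tsub_add_cancel_of_le (hle j)] at this
  have hfun : (fun i => pderiv x (monomial (s i) (1 : R))) =
      (fun i => Units.mk0 _ (hx i)) • (basisMonomials σ R ∘ fun i => s i - Finsupp.single x 1) := by
    ext1 i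
    simp [pderiv_monomial, smul_monomial]
  rw [hfun]
  exact ((basisMonomials σ R).linearIndependent.comp _ hinj).units_smul _

theorem pderiv_mkDerivation_monomial_one {σ R : Type*} [CommSemiring R]
    (φ : σ → MvPolynomial σ R) {s : σ →₀ ℕ} {y : σ} (hy : s y = 0) :
    pderiv y (mkDerivation R φ (monomial s 1)) =
      s.sum fun v k => monomial (s - Finsupp.single v 1) (k : R) * pderiv y (φ v) := by
  rw [mkDerivation_monomial, one_smul, Finsupp.sum, map_sum, Finsupp.sum]
  refine Finset.sum_congr rfl fun v _ => ?_
  rw [smul_eq_mul, Derivation.leibniz, pderiv_monomial]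
  simp [hy]

variable {d : ℕ}

theorem hTau_involutive : Function.Involutive (hTau (d := d)) := fun l => by simp [hTau]

theorem simRel_of_mk_eq {p p' : PrimWordH d} (h : (Quot.mk _ p : WClsH d) = Quot.mk _ p') :
    simRel hTau p.1 p'.1 := by
  have e := simRel_equivalence (hTau_involutive (d := d))
  have e' : Equivalence fun a b : PrimWordH d => simRel hTau a.1 b.1 :=
    ⟨fun a => e.refl a.1, e.symm, e.trans⟩
  exact e'.eqvGen_iff.mp (Quot.eqvGen_exact h)

theorem letterLevel_lt_of_simRel {q : ℕ} {u v : List (HLetter d)} (h : simRel hTau u v)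
    (hv : ∀ l ∈ v, letterLevel l < q) : ∀ l ∈ u, letterLevel l < q := fun l hl =>
  (mem_or_mem_of_simRel hTau_involutive h hl).elim (hv l) (hv _)

theorem exists_inl_mem_of_simRel {u v : List (HLetter d)} (h : simRel hTau u v)
    (hv : ∃ (k : Fin d) (b : Bool), ((Sum.inl k : HBase d), b) ∈ v) :
    ∃ (k : Fin d) (b : Bool), ((Sum.inl k : HBase d), b) ∈ u := by
  obtain ⟨k, b, hkb⟩ := hv
  rcases mem_or_mem_of_simRel hTau_involutive ((simRel_equivalence hTau_involutive).symm h) hkb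
    with hu | hu
  · exact ⟨k, b, hu⟩
  · exact ⟨k, !b, hu⟩

/-- Inverse of `∂_q` on letters. -/
def undoDeriv (q : ℕ+) : HLetter d → HLetter d
  | (Sum.inr (k, s), b) => if s = q then (Sum.inl k, b) else (Sum.inr (k, s), b)
  | l => l

theorem undoDeriv_of_letterLevel_lt {q : ℕ+} {l : HLetter d} (h : letterLevel l < q) :
    undoDeriv q l = l := by
  rcases l with ⟨k | ⟨k, s⟩, b⟩
  · rfl
  · have : s ≠ q := by rintro rfl; exact lt_irrefl _ h
    simp [undoDeriv, this]

theorem undoDeriv_hTau (q : ℕ+) (l : HLetter d) : undoDeriv q (hTau l) = hTau (undoDeriv q l) := by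
  rcases l with ⟨k | ⟨k, s⟩, b⟩
  · rfl
  · by_cases hs : s = q <;> simp [undoDeriv, hTau, hs]

theorem map_undoDeriv_wordT (q : ℕ+) (u : List (HLetter d)) :
    (wordT hTau u).map (undoDeriv q) = wordT hTau (u.map (undoDeriv q)) := by
  simp [wordT, List.map_reverse, Function.comp_def, undoDeriv_hTau]

theorem mem_derivWords {q : ℕ+} {A w : List (HLetter d)} :
    w ∈ derivWords q A ↔ ∃ j, ∃ hj : j < A.length, ∃ (k : Fin d) (b : Bool),
      A[j] = (Sum.inl k, b) ∧ w = A.set j (Sum.inr (k, q), b) := by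
  simp only [derivWords, List.mem_filterMap, List.mem_range]
  constructor
  · rintro ⟨j, hj, hw⟩
    rw [List.getElem?_eq_getElem hj] at hw
    rcases hA : A[j] with ⟨k | p, b⟩ <;> rw [hA] at hw
    · exact ⟨j, hj, k, b, hA, (Option.some.inj hw).symm⟩
    · simp at hw
  · rintro ⟨j, hj, k, b, hA, rfl⟩
    exact ⟨j, hj, by simp [List.getElem?_eq_getElem hj, hA]⟩

theorem derivWords_nodup (q : ℕ+) (A : List (HLetter d)) : (derivWords q A).Nodup := by
  refine List.Nodup.filterMap ?_ List.nodup_range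
  intro j j' w hw hw'
  simp only [Option.mem_def] at hw hw'
  rcases hA : A[j]? with _ | ⟨k | _, b⟩ <;> rw [hA] at hw <;>
    simp only [reduceCtorEq, Option.some.injEq] at hw
  rcases hA' : A[j']? with _ | ⟨k' | _, b'⟩ <;> rw [hA'] at hw' <;>
    simp only [reduceCtorEq, Option.some.injEq] at hw'
  by_contra hne
  obtain ⟨hj, hAj⟩ := List.getElem?_eq_some_iff.mp hA
  have h := congrArg (·[j]?) (hw.trans hw'.symm)
  simp [hj, Ne.symm hne, hAj] at h

theorem exists_mem_derivWords (q : ℕ+) {A : List (HLetter d)}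
    (hA : ∃ (k : Fin d) (b : Bool), ((Sum.inl k : HBase d), b) ∈ A) :
    ∃ w, w ∈ derivWords q A := by
  obtain ⟨k, b, hkb⟩ := hA
  obtain ⟨j, hj, hAj⟩ := List.mem_iff_getElem.mp hkb
  exact ⟨_, mem_derivWords.mpr ⟨j, hj, k, b, hAj, rfl⟩⟩

section PowerAppend

variable {q : ℕ+} {A : List (HLetter d)}

theorem wprimitive_set {P : List (HLetter d)} (hP : ∀ l ∈ P, letterLevel l < q) {p : ℕ}
    (hp : p < P.length) {y : HLetter d} (hy : letterLevel y = q) : WPrimitive (P.set p y) := by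
  refine WPrimitive.of_countP_eq_one_s11 (p := fun l => decide ((q : ℕ) ≤ letterLevel l)) ?_
  have hP0 : P.countP (fun l => decide ((q : ℕ) ≤ letterLevel l)) = 0 :=
    List.countP_eq_zero.mpr fun l hl => by simpa using hP l hl
  simp [List.countP_set hp, hP0, hy, not_le.mpr (hP _ (List.getElem_mem hp))]

theorem eq_of_rotate_set_eq_set {P : List (HLetter d)} (hP : ∀ l ∈ P, letterLevel l < q)
    {p p' r : ℕ} (hp' : p' < P.length) {y y' : HLetter d} (hy' : letterLevel y' = q)
    (h : (P.set p y).rotate r = P.set p' y') : (p' + r) % P.length = p ∧ y' = y := by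
  have hN : 0 < P.length := by omega
  have key := List.getElem_of_eq h.symm (by simpa using hp')
  rw [List.getElem_set_self, List.getElem_rotate, List.getElem_set] at key
  simp only [List.length_set] at key
  split_ifs at key with hpos
  · exact ⟨hpos.symm, key⟩
  · have := hP _ (List.getElem_mem (Nat.mod_lt (p' + r) hN))
    rw [← key] at this
    omega

theorem wpow_append_eq_set {w : List (HLetter d)} (hw : w ∈ derivWords q A) (ℓ : ℕ) :
    ∃ j, ∃ hj : j < A.length, ∃ y : HLetter d, letterLevel y = q ∧ undoDeriv q y = A[j] ∧
      wpow A ℓ ++ w = (wpow A (ℓ + 1)).set (ℓ * A.length + j) y := by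
  obtain ⟨j, hj, k, b, hAj, rfl⟩ := mem_derivWords.mp hw
  refine ⟨j, hj, (Sum.inr (k, q), b), rfl, by simp [undoDeriv, hAj], ?_⟩
  rw [wpow_succ', List.set_append_right _ _ (by simp [length_wpow])]
  simp [length_wpow]

theorem length_wpow_append {w : List (HLetter d)} (hw : w ∈ derivWords q A) (ℓ : ℕ) :
    (wpow A ℓ ++ w).length = (ℓ + 1) * A.length := by
  obtain ⟨j, hj, y, -, -, hu⟩ := wpow_append_eq_set hw ℓ
  simp [hu, length_wpow]

theorem map_undoDeriv_wpow_append (hlev : ∀ l ∈ A, letterLevel l < q) {w : List (HLetter d)}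
    (hw : w ∈ derivWords q A) (ℓ : ℕ) :
    (wpow A ℓ ++ w).map (undoDeriv q) = wpow A (ℓ + 1) := by
  obtain ⟨j, hj, y, -, hyA, hu⟩ := wpow_append_eq_set hw ℓ
  have hfix : (wpow A (ℓ + 1)).map (undoDeriv q) = wpow A (ℓ + 1) :=
    (List.map_congr_left fun l hl =>
      undoDeriv_of_letterLevel_lt (hlev l (mem_of_mem_wpow hl))).trans (List.map_id _)
  have hPp : (wpow A (ℓ + 1))[ℓ * A.length + j]'(by simp [length_wpow]; nlinarith) = A[j] := by
    simp [getElem_wpow, Nat.mod_eq_of_lt hj]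
  rw [hu, List.map_set, hfix, hyA, ← hPp, List.set_getElem_self]

theorem wprimitive_wpow_append (hlev : ∀ l ∈ A, letterLevel l < q) {w : List (HLetter d)}
    (hw : w ∈ derivWords q A) (ℓ : ℕ) : WPrimitive (wpow A ℓ ++ w) := by
  obtain ⟨j, hj, y, hy, -, hu⟩ := wpow_append_eq_set hw ℓ
  rw [hu]
  exact wprimitive_set (fun l hl => hlev l (mem_of_mem_wpow hl))
    (by simp [length_wpow]; nlinarith) hy

theorem not_isRotated_wpow_append_wordT (hlev : ∀ l ∈ A, letterLevel l < q)
    (hnc : ¬ A ~r wordT hTau A) {w w' : List (HLetter d)} (hw : w ∈ derivWords q A)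
    (hw' : w' ∈ derivWords q A) (ℓ : ℕ) :
    ¬ (wpow A ℓ ++ w) ~r wordT hTau (wpow A ℓ ++ w') := fun h => by
  have h' := h.map (undoDeriv q)
  rw [map_undoDeriv_wordT, map_undoDeriv_wpow_append hlev hw,
    map_undoDeriv_wpow_append hlev hw', wordT_wpow] at h'
  exact hnc (isRotated_of_wpow_succ (by simp [wordT]) h')

theorem eq_of_isRotated_wpow_append (hA : WPrimitive A) (hlev : ∀ l ∈ A, letterLevel l < q)
    {w w' : List (HLetter d)} (hw : w ∈ derivWords q A) (hw' : w' ∈ derivWords q A) {ℓ : ℕ}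
    (h : (wpow A ℓ ++ w) ~r (wpow A ℓ ++ w')) : w = w' := by
  obtain ⟨r, hr⟩ := h
  -- Erasing the derivative, `r` rotates `A^{ℓ+1}` and hence `A` into itself; the position of
  -- the unique letter of level `q` then forces `j = j'`.
  have hdvd : A.length ∣ r := by
    have hP := congrArg (List.map (undoDeriv q)) hr
    rw [List.map_rotate, map_undoDeriv_wpow_append hlev hw, map_undoDeriv_wpow_append hlev hw',
      rotate_wpow] at hP
    exact hA.length_dvd_of_rotate_eq_self (eq_of_wpow_succ_eq (by simp) hP)
  obtain ⟨j, hj, y, -, -, hu⟩ := wpow_append_eq_set hw ℓ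
  obtain ⟨j', hj', y', hy', -, hu'⟩ := wpow_append_eq_set hw' ℓ
  rw [hu, hu'] at hr
  obtain ⟨hpos, rfl⟩ := eq_of_rotate_set_eq_set (fun l hl => hlev l (mem_of_mem_wpow hl))
    (by simp [length_wpow]; nlinarith) hy' hr
  have hjj : j' = j := by
    have := congrArg (· % A.length) hpos
    obtain ⟨c, rfl⟩ := hdvd
    simpa [length_wpow, Nat.mod_mod_of_dvd, Nat.mod_eq_of_lt hj, Nat.mod_eq_of_lt hj'] using this
  subst hjj
  exact List.append_cancel_left (hu.trans hu'.symm)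

theorem eq_of_simRel_wpow_append (hA : WPrimitive A) (hlev : ∀ l ∈ A, letterLevel l < q)
    (hnc : ¬ A ~r wordT hTau A) {w w' : List (HLetter d)} (hw : w ∈ derivWords q A)
    (hw' : w' ∈ derivWords q A) {ℓ ℓ' : ℕ} (h : simRel hTau (wpow A ℓ ++ w) (wpow A ℓ' ++ w')) :
    ℓ = ℓ' ∧ w = w' := by
  have hℓ : ℓ = ℓ' := by
    have := length_eq_of_simRel h
    rw [length_wpow_append hw, length_wpow_append hw'] at this
    exact Nat.succ_injective (Nat.eq_of_mul_eq_mul_right (List.length_pos_iff.mpr hA.1) this)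
  subst hℓ
  rcases h with h | h
  · exact ⟨rfl, eq_of_isRotated_wpow_append hA hlev hw hw' h⟩
  · exact absurd h (not_isRotated_wpow_append_wordT hlev hnc hw hw' ℓ)

theorem not_simRel_wpow_append {w : List (HLetter d)} (hw : w ∈ derivWords q A) (ℓ : ℕ)
    {v : List (HLetter d)} (hv : ∀ l ∈ v, letterLevel l < q) :
    ¬ simRel hTau (wpow A ℓ ++ w) v := fun h => by
  obtain ⟨j, hj, y, hy, -, hu⟩ := wpow_append_eq_set hw ℓ
  have := letterLevel_lt_of_simRel h hv y (hu ▸ List.mem_set (by simp [length_wpow]; nlinarith) y)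
  omega

end PowerAppend

section Trace

variable {q : ℕ+} {A : List (HLetter d)}

def trVar (hlev : ∀ l ∈ A, letterLevel l < q) {w : List (HLetter d)} (hw : w ∈ derivWords q A)
    (ℓ : ℕ) : ℕ+ × WClsH d :=
  (1, Quot.mk _ ⟨wpow A ℓ ++ w, wprimitive_wpow_append hlev hw ℓ⟩)

theorem trW_wpow_append (F : Type*) [CommSemiring F] (hlev : ∀ l ∈ A, letterLevel l < q)
    {w : List (HLetter d)} (hw : w ∈ derivWords q A) (ℓ : ℕ) :
    trW F (wpow A ℓ ++ w) = X (trVar hlev hw ℓ) := by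
  simp [trW, trVar, wprimitive_wpow_append hlev hw ℓ]

theorem trVar_eq_trVar_iff (hA : WPrimitive A) (hlev : ∀ l ∈ A, letterLevel l < q)
    (hnc : ¬ A ~r wordT hTau A) {w w' : List (HLetter d)} (hw : w ∈ derivWords q A)
    (hw' : w' ∈ derivWords q A) {ℓ ℓ' : ℕ} :
    trVar hlev hw ℓ = trVar hlev hw' ℓ' ↔ ℓ = ℓ' ∧ w = w' := by
  refine ⟨fun h => eq_of_simRel_wpow_append hA hlev hnc hw hw' ?_, ?_⟩
  · exact simRel_of_mk_eq (congrArg Prod.snd h)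
  · rintro ⟨rfl, rfl⟩
    rfl

theorem trVar_snd_ne (hlev : ∀ l ∈ A, letterLevel l < q) {w : List (HLetter d)}
    (hw : w ∈ derivWords q A) (ℓ : ℕ) {c : WClsH d}
    (hc : ∀ l ∈ (Quot.out c).1, letterLevel l < q) : (trVar hlev hw ℓ).2 ≠ c := fun h =>
  not_simRel_wpow_append hw ℓ hc (simRel_of_mk_eq (h.trans (Quot.out_eq c).symm))

theorem pderiv_sum_trW (F : Type*) [CommSemiring F] (hA : WPrimitive A)
    (hlev : ∀ l ∈ A, letterLevel l < q) (hnc : ¬ A ~r wordT hTau A) {w₀ : List (HLetter d)}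
    (hw₀ : w₀ ∈ derivWords q A) (L ℓ : ℕ) :
    pderiv (trVar hlev hw₀ L) ((derivWords q A).map fun w => trW F (wpow A ℓ ++ w)).sum =
      if ℓ = L then 1 else 0 := by
  classical
  have hterm : ∀ w ∈ derivWords q A, pderiv (trVar hlev hw₀ L) (trW F (wpow A ℓ ++ w)) =
      if ℓ = L ∧ w = w₀ then 1 else 0 := fun w hw => by
    rw [trW_wpow_append F hlev hw, pderiv_X, Pi.single_apply]
    simp only [trVar_eq_trVar_iff hA hlev hnc hw hw₀]
  rw [map_list_sum, List.map_map, List.map_congr_left (by simpa using hterm),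
    ← List.sum_toFinset _ (derivWords_nodup q A)]
  split_ifs with hℓ <;> simp [hℓ, hw₀]

theorem pderiv_sigVar (F : Type*) [CommSemiring F] {y : ℕ+ × WClsH d} {c : WClsH d}
    (hy : y.2 ≠ c) (u : ℕ) : pderiv y (sigVar F u c) = 0 := by
  classical
  unfold sigVar
  split_ifs
  · rw [pderiv_X, Pi.single_apply, if_neg fun h => hy (by rw [← h])]
  · exact (pderiv y).map_one_eq_zero

theorem pderiv_dVal (F : Type*) [CommRing F] {c : WClsH d}
    (hlev : ∀ l ∈ (Quot.out c).1, letterLevel l < q)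
    (hnc : ¬ (Quot.out c).1 ~r wordT hTau (Quot.out c).1) {w₀ : List (HLetter d)}
    (hw₀ : w₀ ∈ derivWords q (Quot.out c).1) (L : ℕ) (T : ℕ+) :
    pderiv (trVar hlev hw₀ L) (dVal F q (T, c)) =
      if L < T then (-1) ^ L * sigVar F (T - L - 1) c else 0 := by
  simp [dVal, Derivation.leibniz, Derivation.leibniz_pow,
    pderiv_sigVar F (trVar_snd_ne hlev hw₀ L hlev), pderiv_sum_trW F (Quot.out c).2 hlev hnc hw₀, mul_comm]

theorem pderiv_DS_monomial (F : Type*) [CommRing F] {c : WClsH d}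
    (hlev : ∀ l ∈ (Quot.out c).1, letterLevel l < q)
    (hnc : ¬ (Quot.out c).1 ~r wordT hTau (Quot.out c).1) {w₀ : List (HLetter d)}
    (hw₀ : w₀ ∈ derivWords q (Quot.out c).1) (n : ℕ+) {s : (ℕ+ × WClsH d) →₀ ℕ}
    (hs : ∀ v ∈ s.support, v.2 = c ∧ v.1 ≤ n) :
    pderiv (trVar hlev hw₀ (n - 1)) (DS F d q (monomial s 1)) =
      (-1 : F) ^ ((n : ℕ) - 1) • pderiv (n, c) (monomial s 1) := by
  have hy : s (trVar hlev hw₀ (n - 1)) = 0 := by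
    by_contra h
    exact trVar_snd_ne hlev hw₀ _ hlev (hs _ (Finsupp.mem_support_iff.mpr h)).1
  rw [DS, pderiv_mkDerivation_monomial_one _ hy, pderiv_monomial, Finsupp.sum_eq_single (n, c)]
  · rw [pderiv_dVal F hlev hnc hw₀]
    have h1 : (n : ℕ) - ((n : ℕ) - 1) = 1 := by have := n.pos; omega
    simp [sigVar, h1, smul_eq_C_mul, mul_comm]
  · rintro ⟨T, c'⟩ hv hne
    obtain ⟨rfl, hT⟩ := hs _ (Finsupp.mem_support_iff.mpr hv)
    have hTn : (T : ℕ) < n :=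
      PNat.coe_lt_coe _ _ |>.mpr (lt_of_le_of_ne hT fun h => hne (by rw [h]))
    rw [pderiv_dVal F hlev hnc hw₀, if_neg (by omega), mul_zero]
  · simp

theorem linearIndependent_DS_monomial (F : Type*) [Field F] {c : WClsH d}
    (hlev : ∀ l ∈ (Quot.out c).1, letterLevel l < q)
    (hnc : ¬ (Quot.out c).1 ~r wordT hTau (Quot.out c).1)
    (hx : ∃ (k : Fin d) (b : Bool), ((Sum.inl k : HBase d), b) ∈ (Quot.out c).1)
    {ι : Type*} [Fintype ι] {s : ι → (ℕ+ × WClsH d) →₀ ℕ} (hs : Function.Injective s)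
    (top : ι → ℕ+) (hsupp : ∀ i, ∀ v ∈ (s i).support, v.2 = c ∧ v.1 ≤ top i)
    (htop : ∀ i, (s i (top i, c) : F) ≠ 0) :
    LinearIndependent F fun i => DS F d q (monomial (s i) 1) := by
  obtain ⟨w₀, hw₀⟩ := exists_mem_derivWords q hx
  refine linearIndependent_of_triangular top
    (fun n => (pderiv (trVar hlev hw₀ (n - 1))).toLinearMap) (fun i n hlt => ?_) (fun n => ?_)
  · have hzero : s i (n, c) = 0 := by
      by_contra h
      exact not_lt_of_ge (hsupp i _ (Finsupp.mem_support_iff.mpr h)).2 hlt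
    simp [pderiv_DS_monomial F hlev hnc hw₀ n fun v hv =>
      ⟨(hsupp i v hv).1, (hsupp i v hv).2.trans hlt.le⟩, pderiv_monomial, hzero]
  · have hli := linearIndependent_pderiv_monomial (R := F) (n, c)
      (s := fun i : {i // top i = n} => s i) (hs.comp Subtype.val_injective)
      fun i => by simpa [i.2] using htop i
    have hfun : (fun i : {i // top i = n} => pderiv (trVar hlev hw₀ (n - 1))
        (DS F d q (monomial (s i) 1))) =
        (fun _ : {i // top i = n} => ((-1) ^ ((n : ℕ) - 1) : Fˣ)) •
          fun i : {i // top i = n} => pderiv (n, c) (monomial (s i) (1 : F)) := by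
      ext1 i
      simp [pderiv_DS_monomial F hlev hnc hw₀ n fun v hv => by simpa [i.2] using hsupp i v hv,
        Units.smul_def]
    exact hfun ▸ hli.units_smul _

end Trace

end WordDeriv

open WordDeriv

theorem DS_linearIndependent_general (F : Type*) [Field F] (d : ℕ) (q : ℕ+)
    (a : List (HLetter d)) (ha : WPrimitive a)
    (hlev : ∀ l ∈ a, letterLevel l ≤ (q : ℕ) - 1)
    (hx : ∃ (k : Fin d) (b : Bool), ((Sum.inl k : HBase d), b) ∈ a)
    (hnc : ¬ List.IsRotated a (wordT hTau a))
    (s : ℕ) (r : Fin s → ℕ) (hr : ∀ i, 0 < r i)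
    (t : (i : Fin s) → Fin (r i) → ℕ+) (ht : ∀ i, StrictAnti (t i))
    (m : (i : Fin s) → Fin (r i) → ℕ)
    (hmp : ∀ i j, ¬ (ringChar F ∣ m i j))
    (f : Fin s → NsigmaH F d)
    (hf : ∀ i, f i =
      ∏ j, MvPolynomial.X ((t i j, Quot.mk _ (⟨a, ha⟩ : PrimWordH d)) : ℕ+ × WClsH d)
        ^ (m i j))
    (hdist : Function.Injective f) :
    LinearIndependent F (fun i : Fin s => DS F d q (f i)) := by
  classical
  set c : WClsH d := Quot.mk _ ⟨a, ha⟩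
  have hAa : simRel hTau (Quot.out c).1 a := simRel_of_mk_eq (Quot.out_eq c)
  have hfs : ∀ i, f i = monomial (∑ j, Finsupp.single (t i j, c) (m i j)) 1 := fun i => by
    simp [hf, X_pow_eq_monomial, monomial_sum_one, c]
  simp only [hfs]
  refine linearIndependent_DS_monomial F
    (letterLevel_lt_of_simRel hAa fun l hl => Nat.lt_of_le_pred q.pos (hlev l hl))
    (fun h => hnc (isRotated_wordT_self_of_simRel hTau_involutive hAa h))
    (exists_inl_mem_of_simRel hAa hx) (fun i i' h => hdist (by rw [hfs, hfs, h]))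
    (fun i => t i ⟨0, hr i⟩) (fun i v hv => ?_) (fun i => ?_)
  · obtain ⟨j, -, hj⟩ := Finset.mem_biUnion.mp (Finsupp.support_finsetSum hv)
    obtain ⟨rfl, -⟩ := Finsupp.mem_support_single _ _ _ |>.mp hj
    exact ⟨rfl, (ht i).antitone (Nat.zero_le _)⟩
  · have hinj : Function.Injective fun j => (t i j, c) := fun j j' h =>
      (ht i).injective (congrArg Prod.fst h)
    simpa [Finsupp.finsetSum_apply, Finsupp.single_apply, hinj.eq_iff]
      using fun h => hmp i _ ((ringChar.spec F _).mp h)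

/-- **Lemma 3.5.** Let `q ≥ 1` and let `a ∈ M̂(q-1)` be a primitive word containing some
letter `x_k` or `x_k^T` and such that no cyclic permutation of `a` equals `a^T`. Let
`f_1, …, f_s` be pairwise distinct monomials `f_i = Π_j σ_{t_{ij}}(ā)^{m_{ij}}` with
`t_{i1} > ⋯ > t_{i r_i} ≥ 1` and each `m_{ij} > 0` not divisible by `p = char F`.
Then `∂_q(f_1), …, ∂_q(f_s)` are linearly independent over `F`. -/
theorem DS_linearIndependent (F : Type*) [Field F] (d : ℕ) (hd : 1 ≤ d) (q : ℕ+)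
    (a : List (HLetter d)) (ha : WPrimitive a)
    (hlev : ∀ l ∈ a, letterLevel l ≤ (q : ℕ) - 1)
    (hx : ∃ (k : Fin d) (b : Bool), ((Sum.inl k : HBase d), b) ∈ a)
    (hnc : ¬ List.IsRotated a (wordT hTau a))
    (s : ℕ) (r : Fin s → ℕ) (hr : ∀ i, 0 < r i)
    (t : (i : Fin s) → Fin (r i) → ℕ+) (ht : ∀ i, StrictAnti (t i))
    (m : (i : Fin s) → Fin (r i) → ℕ) (hm : ∀ i j, 0 < m i j)
    (hmp : ∀ i j, ¬ (ringChar F ∣ m i j))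
    (f : Fin s → NsigmaH F d)
    (hf : ∀ i, f i =
      ∏ j, MvPolynomial.X ((t i j, Quot.mk _ (⟨a, ha⟩ : PrimWordH d)) : ℕ+ × WClsH d)
        ^ (m i j))
    (hdist : Function.Injective f) :
    LinearIndependent F (fun i : Fin s => DS F d q (f i)) :=
  DS_linearIndependent_general F d q a ha hlev hx hnc s r hr t ht m hmp f hf hdist
end
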